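/- arXiv:1601.07096 — 5 statements merged into one kernel-verified Lean document; each statement's English description precedes it below -/
import Mathlib

section
/- Let (f,g): (Ã,B̃,α̃) → (A,B,α) be a morphism of crossed modules with α̃ surjective, and let (φ,X,ω) be a lifting of (A,B,α). Then there exists a unique group morphism g̃: B̃ → X such that (f,g̃) is a morphism of crossed modules from (Ã,B̃,α̃) to (A,X,φ) and ωg̃ = g, if and only if f(Ker α̃) ⊆ Ker φ. -/
/-- A crossed module `(A, B, α)`: groups `A`, `B`, an action of `B` on `A` by
automorphisms, and a homomorphism `α : A →* B` satisfying CM1 and CM2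
(written multiplicatively). -/
structure IsCrossedModule {A B : Type*} [Group A] [Group B]
    (act : B → A → A) (α : A →* B) : Prop where
  act_one : ∀ a, act 1 a = a
  act_mul : ∀ b b' a, act (b * b') a = act b (act b' a)
  act_map_mul : ∀ b a a', act b (a * a') = act b a * act b a'
  cm1 : ∀ b a, α (act b a) = b * α a * b⁻¹
  cm2 : ∀ a a₁, act (α a) a₁ = a * a₁ * a⁻¹

/-- `(φ, X, ω)` is a lifting of the crossed module `(A, B, α)` (with action `act`):
`(A, X, φ)` is a crossed module with `X` acting on `A` via `ω`, and `ω ∘ φ = α`. -/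
def IsLifting {A B X : Type*} [Group A] [Group B] [Group X]
    (act : B → A → A) (α : A →* B) (ω : X →* B) (φ : A →* X) : Prop :=
  IsCrossedModule (fun x a => act (ω x) a) φ ∧ ω.comp φ = α

/-!
Since `α'` is surjective, a homomorphism `g' : B' → X` is determined by `g' ∘ α'`, and the
condition `g' ∘ α' = φ ∘ f` already forces the other two: `ω ∘ g' ∘ α' = α ∘ f = g ∘ α'` gives
`ω ∘ g' = g`, after which compatibility with the actions is that of `(f, g)`. So the lifts are
exactly the factorizations of `φ ∘ f` through `α'`, and one exists (uniquely) iff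
`Ker α' ≤ Ker (φ ∘ f)`, i.e. `f (Ker α') ≤ Ker φ`.
-/

theorem MonoidHom.existsUnique_comp_eq_iff_ker_le {G H K : Type*} [Group G] [Group H] [Group K]
    {p : G →* H} (hp : Function.Surjective p) (k : G →* K) :
    (∃! q : H →* K, q.comp p = k) ↔ p.ker ≤ k.ker := by
  constructor
  · rintro ⟨q, rfl, -⟩ x hx
    rw [mem_ker, comp_apply, mem_ker.mp hx, map_one]
  · intro hk
    have hlift := p.liftOfRightInverse_comp _ (Function.rightInverse_surjInv hp) ⟨k, hk⟩
    exact ⟨p.liftOfSurjective hp ⟨k, hk⟩, hlift,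
      fun q hq => (cancel_right hp).mp (hq.trans hlift.symm)⟩

theorem lift_morphism_conditions_iff_comp_eq {A' B' A B X : Type*}
    [Group A'] [Group B'] [Group A] [Group B] [Group X]
    {act' : B' → A' → A'} {α' : A' →* B'} {act : B → A → A} {α : A →* B}
    {f : A' →* A} {g : B' →* B} (hmor1 : g.comp α' = α.comp f)
    (hmor2 : ∀ (b : B') (a : A'), f (act' b a) = act (g b) (f a))
    (hsurj : Function.Surjective α') {ω : X →* B} {φ : A →* X} (hωφ : ω.comp φ = α)
    (g' : B' →* X) :
    ((g'.comp α' = φ.comp f ∧ ∀ (b : B') (a : A'), f (act' b a) = act (ω (g' b)) (f a)) ∧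
        ω.comp g' = g) ↔ g'.comp α' = φ.comp f := by
  refine ⟨fun hg' => hg'.1.1, fun hcomp => ?_⟩
  have hωg' : ω.comp g' = g := by
    refine (MonoidHom.cancel_right hsurj).mp ?_
    rw [MonoidHom.comp_assoc, hcomp, ← MonoidHom.comp_assoc, hωφ, hmor1]
  refine ⟨⟨hcomp, fun b a => ?_⟩, hωg'⟩
  rw [← MonoidHom.comp_apply ω g', hωg']
  exact hmor2 b a

theorem lifting_morphism_existence_iff_general {A' B' A B X : Type*}
    [Group A'] [Group B'] [Group A] [Group B] [Group X]
    (act' : B' → A' → A') (α' : A' →* B')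
    (act : B → A → A) (α : A →* B)
    (f : A' →* A) (g : B' →* B)
    (hmor1 : g.comp α' = α.comp f)
    (hmor2 : ∀ (b : B') (a : A'), f (act' b a) = act (g b) (f a))
    (hsurj : Function.Surjective α')
    (ω : X →* B) (φ : A →* X) (hl : IsLifting act α ω φ) :
    (∃! g' : B' →* X,
        (g'.comp α' = φ.comp f ∧
          ∀ (b : B') (a : A'), f (act' b a) = act (ω (g' b)) (f a)) ∧
        ω.comp g' = g) ↔
      α'.ker.map f ≤ φ.ker := by
  rw [existsUnique_congr (lift_morphism_conditions_iff_comp_eq hmor1 hmor2 hsurj hl.2),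
    MonoidHom.existsUnique_comp_eq_iff_ker_le hsurj, Subgroup.map_le_iff_le_comap,
    MonoidHom.comap_ker]

/-- given a morphism `(f, g)` of crossed modules from a transitive
crossed module `(A', B', α')` (`α'` surjective) to `(A, B, α)`, and a lifting
`(φ, X, ω)` of `(A, B, α)`, there is a unique morphism of crossed modules
`(f, g')` from `(A', B', α')` to `(A, X, φ)` with `ω ∘ g' = g` iff
`f (Ker α') ⊆ Ker φ`. -/
theorem lifting_morphism_existence_iff {A' B' A B X : Type*}
    [Group A'] [Group B'] [Group A] [Group B] [Group X]
    (act' : B' → A' → A') (α' : A' →* B') (h' : IsCrossedModule act' α')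
    (act : B → A → A) (α : A →* B) (h : IsCrossedModule act α)
    (f : A' →* A) (g : B' →* B)
    (hmor1 : g.comp α' = α.comp f)
    (hmor2 : ∀ (b : B') (a : A'), f (act' b a) = act (g b) (f a))
    (hsurj : Function.Surjective α')
    (ω : X →* B) (φ : A →* X) (hl : IsLifting act α ω φ) :
    (∃! g' : B' →* X,
        (g'.comp α' = φ.comp f ∧
          ∀ (b : B') (a : A'), f (act' b a) = act (ω (g' b)) (f a)) ∧
        ω.comp g' = g) ↔
      α'.ker.map f ≤ φ.ker :=
  lifting_morphism_existence_iff_general act' α' act α f g hmor1 hmor2 hsurj ω φ hl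
end

section
/- Let (A,B,α) be a crossed module and let (φ,X,ω) and (φ̃,X̃,ω̃) be two liftings of (A,B,α) such that φ̃ is surjective. Then there exists a morphism of liftings from (φ̃,X̃,ω̃) to (φ,X,ω) (a group morphism f: X̃ → X with fφ̃ = φ and ωf = ω̃) if and only if Ker φ̃ ⊆ Ker φ. -/
theorem MonoidHom.exists_comp_eq_iff_ker_le {G₁ G₂ G₃ : Type*} [Group G₁] [Group G₂] [Group G₃]
    {p : G₁ →* G₂} (hp : Function.Surjective p) (g : G₁ →* G₃) :
    (∃ f : G₂ →* G₃, f.comp p = g) ↔ p.ker ≤ g.ker := by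
  constructor
  · rintro ⟨f, rfl⟩
    rw [← MonoidHom.comap_ker]
    exact MonoidHom.ker_le_comap p f.ker
  · intro hker
    exact ⟨p.liftOfSurjective hp ⟨g, hker⟩, p.liftOfRightInverse_comp _ _ ⟨g, hker⟩⟩

theorem IsLifting.comp_eq_of_comp_eq {A B X X' : Type*} [Group A] [Group B] [Group X] [Group X']
    {act : B → A → A} {α : A →* B} {ω : X →* B} {φ : A →* X} {ω' : X' →* B} {φ' : A →* X'}
    (hl : IsLifting act α ω φ) (hl' : IsLifting act α ω' φ') (hsurj : Function.Surjective φ')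
    {f : X' →* X} (hf : f.comp φ' = φ) : ω.comp f = ω' := by
  rw [← MonoidHom.cancel_right hsurj, MonoidHom.comp_assoc, hf, hl.2, hl'.2]

theorem lifting_morphism_iff_ker_le_general {A B X X' : Type*}
    [Group A] [Group B] [Group X] [Group X']
    (act : B → A → A) (α : A →* B)
    (ω : X →* B) (φ : A →* X) (hl : IsLifting act α ω φ)
    (ω' : X' →* B) (φ' : A →* X') (hl' : IsLifting act α ω' φ')
    (hsurj : Function.Surjective φ') :
    (∃ f : X' →* X, f.comp φ' = φ ∧ ω.comp f = ω') ↔ φ'.ker ≤ φ.ker := by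
  rw [← MonoidHom.exists_comp_eq_iff_ker_le hsurj]
  exact exists_congr fun f => and_iff_left_of_imp (hl.comp_eq_of_comp_eq hl' hsurj)

/-- let `(φ, X, ω)` and `(φ', X', ω')` be liftings of `(A, B, α)`
with `φ'` surjective (so `(A, X', φ')` is transitive). Then there is a morphism of
liftings from `(φ', X', ω')` to `(φ, X, ω)` iff `Ker φ' ⊆ Ker φ`. -/
theorem lifting_morphism_iff_ker_le {A B X X' : Type*}
    [Group A] [Group B] [Group X] [Group X']
    (act : B → A → A) (α : A →* B) (h : IsCrossedModule act α)
    (ω : X →* B) (φ : A →* X) (hl : IsLifting act α ω φ)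
    (ω' : X' →* B) (φ' : A →* X') (hl' : IsLifting act α ω' φ')
    (hsurj : Function.Surjective φ') :
    (∃ f : X' →* X, f.comp φ' = φ ∧ ω.comp f = ω') ↔ φ'.ker ≤ φ.ker :=
  lifting_morphism_iff_ker_le_general act α ω φ hl ω' φ' hl' hsurj
end

section
/- Let (A,B,α) be a crossed module and let (φ,X,ω) and (φ̃,X̃,ω̃) be two liftings of (A,B,α) with both φ and φ̃ surjective. Then the liftings are isomorphic (there is a group isomorphism f: X → X̃ with fφ = φ̃ and ω̃f = ω) if and only if Ker φ = Ker φ̃. -/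
/-! A transitive lifting `φ : A →* X` identifies `X` with `A ⧸ Ker φ`, so two transitive liftings
with the same kernel are identified through `A ⧸ Ker φ = A ⧸ Ker φ'`, compatibly with `φ` and `φ'`.
The maps to `B` then agree because both composites with the surjection `φ` equal `α`. -/

namespace MonoidHom

variable {A X X' : Type*} [Group A] [Group X] [Group X']

theorem ker_eq_of_mulEquiv_comp {φ : A →* X} {φ' : A →* X'} (f : X ≃* X')
    (hf : ∀ a, f (φ a) = φ' a) : φ.ker = φ'.ker := by
  rw [← ker_mulEquiv_comp φ f]
  congr 1
  exact MonoidHom.ext hf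

noncomputable def mulEquivOfKerEq {φ : A →* X} {φ' : A →* X'} (hsurj : Function.Surjective φ)
    (hsurj' : Function.Surjective φ') (hker : φ.ker = φ'.ker) : X ≃* X' :=
  (QuotientGroup.quotientKerEquivOfSurjective φ hsurj).symm.trans <|
    (QuotientGroup.quotientMulEquivOfEq hker).trans
      (QuotientGroup.quotientKerEquivOfSurjective φ' hsurj')

@[simp]
theorem mulEquivOfKerEq_apply_map {φ : A →* X} {φ' : A →* X'} (hsurj : Function.Surjective φ)
    (hsurj' : Function.Surjective φ') (hker : φ.ker = φ'.ker) (a : A) :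
    mulEquivOfKerEq hsurj hsurj' hker (φ a) = φ' a := by
  have hmk : (QuotientGroup.quotientKerEquivOfSurjective φ hsurj).symm (φ a) = a :=
    (MulEquiv.symm_apply_eq _).2 rfl
  simp only [mulEquivOfKerEq, MulEquiv.trans_apply, hmk]
  rfl

end MonoidHom

theorem lifting_iso_iff_ker_eq_general {A B X X' : Type*}
    [Group A] [Group B] [Group X] [Group X']
    (act : B → A → A) (α : A →* B)
    (ω : X →* B) (φ : A →* X) (hl : IsLifting act α ω φ)
    (ω' : X' →* B) (φ' : A →* X') (hl' : IsLifting act α ω' φ')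
    (hsurj : Function.Surjective φ) (hsurj' : Function.Surjective φ') :
    (∃ f : X ≃* X', (∀ a : A, f (φ a) = φ' a) ∧ ∀ x : X, ω' (f x) = ω x) ↔
      φ.ker = φ'.ker := by
  refine ⟨fun ⟨f, hf, _⟩ => MonoidHom.ker_eq_of_mulEquiv_comp f hf, fun hker => ?_⟩
  refine ⟨MonoidHom.mulEquivOfKerEq hsurj hsurj' hker,
    MonoidHom.mulEquivOfKerEq_apply_map hsurj hsurj' hker, ?_⟩
  intro x
  obtain ⟨a, rfl⟩ := hsurj x
  rw [MonoidHom.mulEquivOfKerEq_apply_map, ← MonoidHom.comp_apply, hl'.2, ← hl.2,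
    MonoidHom.comp_apply]

/-- two transitive liftings `(φ, X, ω)` and `(φ', X', ω')` of
`(A, B, α)` (both `φ` and `φ'` surjective) are isomorphic iff `Ker φ = Ker φ'`. -/
theorem lifting_iso_iff_ker_eq {A B X X' : Type*}
    [Group A] [Group B] [Group X] [Group X']
    (act : B → A → A) (α : A →* B) (h : IsCrossedModule act α)
    (ω : X →* B) (φ : A →* X) (hl : IsLifting act α ω φ)
    (ω' : X' →* B) (φ' : A →* X') (hl' : IsLifting act α ω' φ')
    (hsurj : Function.Surjective φ) (hsurj' : Function.Surjective φ') :
    (∃ f : X ≃* X', (∀ a : A, f (φ a) = φ' a) ∧ ∀ x : X, ω' (f x) = ω x) ↔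
      φ.ker = φ'.ker :=
  lifting_iso_iff_ker_eq_general act α ω φ hl ω' φ' hl' hsurj hsurj'
end

section
/- Let G be a group-groupoid (an internal groupoid in the category of groups) with source map d₀, target map d₁ and object group Ob(G). Let A = Ker d₀ ⊆ G and B = Ob(G). Then with the action of B on A given by b·a := 1_b + a − 1_b, the restriction d₁: A → B is a crossed module, i.e. d₁(b·a) = b + d₁(a) − b and d₁(a)·a₁ = a + a₁ − a for all a,a₁ ∈ A, b ∈ B. -/
/-- A group-groupoid: a groupoid whose object set `O` and morphism set `G` are
groups and all structure maps (source `d₀`, target `d₁`, identity `ι`,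
composition `comp`, groupoid inverse `ginv`) are compatible with the group
structure; in particular the interchange law holds. -/
structure GroupGroupoid (O G : Type*) [Group O] [Group G] where
  d₀ : G →* O
  d₁ : G →* O
  ι : O →* G
  comp : ∀ (g h : G), d₀ g = d₁ h → G
  ginv : G → G
  d₀_ι : ∀ b, d₀ (ι b) = b
  d₁_ι : ∀ b, d₁ (ι b) = b
  d₀_comp : ∀ (g h : G) (hc : d₀ g = d₁ h), d₀ (comp g h hc) = d₀ h
  d₁_comp : ∀ (g h : G) (hc : d₀ g = d₁ h), d₁ (comp g h hc) = d₁ g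
  id_comp : ∀ (g : G) (hc : d₀ (ι (d₁ g)) = d₁ g), comp (ι (d₁ g)) g hc = g
  comp_id : ∀ (g : G) (hc : d₀ g = d₁ (ι (d₀ g))), comp g (ι (d₀ g)) hc = g
  d₀_ginv : ∀ g, d₀ (ginv g) = d₁ g
  d₁_ginv : ∀ g, d₁ (ginv g) = d₀ g
  comp_ginv : ∀ (g : G) (hc : d₀ g = d₁ (ginv g)), comp g (ginv g) hc = ι (d₁ g)
  ginv_comp : ∀ (g : G) (hc : d₀ (ginv g) = d₁ g), comp (ginv g) g hc = ι (d₀ g)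
  comp_assoc : ∀ (g h k : G) (hgh : d₀ g = d₁ h) (hhk : d₀ h = d₁ k)
    (h₁ : d₀ (comp g h hgh) = d₁ k) (h₂ : d₀ g = d₁ (comp h k hhk)),
    comp (comp g h hgh) k h₁ = comp g (comp h k hhk) h₂
  interchange : ∀ (g h g' h' : G) (hgh : d₀ g = d₁ h) (hg'h' : d₀ g' = d₁ h')
    (hc : d₀ (g * g') = d₁ (h * h')),
    comp g h hgh * comp g' h' hg'h' = comp (g * g') (h * h') hc

/-! The interchange law forces `x * y = x ∘ y = y * x` whenever `x` has trivial source and `y`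
trivial target, so `Ker d₀` and `Ker d₁` commute. CM2 follows because `a` and `ι (d₁ a)` differ
by an element of `Ker d₁`, hence act in the same way on `Ker d₀` by conjugation. -/

namespace GroupGroupoid

variable {O G : Type*} [Group O] [Group G] (GG : GroupGroupoid O G)

theorem comp_congr {g g' h h' : G} (hc : GG.d₀ g = GG.d₁ h) (hc' : GG.d₀ g' = GG.d₁ h')
    (hg : g = g') (hh : h = h') : GG.comp g h hc = GG.comp g' h' hc' := by
  subst hg hh
  rfl

theorem comp_eq_left {g h : G} (hc : GG.d₀ g = GG.d₁ h) (hh : h = GG.ι (GG.d₀ g)) :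
    GG.comp g h hc = g := by
  subst hh
  exact GG.comp_id g hc

theorem comp_eq_right {g h : G} (hc : GG.d₀ g = GG.d₁ h) (hg : g = GG.ι (GG.d₁ h)) :
    GG.comp g h hc = h := by
  subst hg
  exact GG.id_comp h hc

theorem commute_of_d₀_eq_one_of_d₁_eq_one {x y : G} (hx : GG.d₀ x = 1) (hy : GG.d₁ y = 1) :
    Commute x y := by
  have hxy : GG.d₀ x = GG.d₁ y := hx.trans hy.symm
  have hx1 : GG.d₀ x = GG.d₁ 1 := by rw [hx, map_one]
  have h1y : GG.d₀ 1 = GG.d₁ y := by rw [hy, map_one]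
  have hx_comp : GG.comp x 1 hx1 = x := GG.comp_eq_left hx1 (by rw [hx, map_one])
  have hy_comp : GG.comp 1 y h1y = y := GG.comp_eq_right h1y (by rw [hy, map_one])
  have hxy_mul : x * y = GG.comp x y hxy :=
    calc x * y = GG.comp x 1 hx1 * GG.comp 1 y h1y := by rw [hx_comp, hy_comp]
      _ = GG.comp (x * 1) (1 * y) (by simpa using hxy) := GG.interchange _ _ _ _ _ _ _
      _ = GG.comp x y hxy := GG.comp_congr _ _ (mul_one x) (one_mul y)
  have hyx_mul : y * x = GG.comp x y hxy :=
    calc y * x = GG.comp 1 y h1y * GG.comp x 1 hx1 := by rw [hx_comp, hy_comp]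
      _ = GG.comp (1 * x) (y * 1) (by simpa using hxy) := GG.interchange _ _ _ _ _ _ _
      _ = GG.comp x y hxy := GG.comp_congr _ _ (one_mul x) (mul_one y)
  exact hxy_mul.trans hyx_mul.symm

theorem d₀_ι_conj (b : O) (a : G) : GG.d₀ (GG.ι b * a * (GG.ι b)⁻¹) = b * GG.d₀ a * b⁻¹ := by
  simp only [map_mul, map_inv, d₀_ι]

theorem d₁_ι_conj (b : O) (a : G) : GG.d₁ (GG.ι b * a * (GG.ι b)⁻¹) = b * GG.d₁ a * b⁻¹ := by
  simp only [map_mul, map_inv, d₁_ι]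

theorem ι_d₁_conj_eq_conj (a : G) {a₁ : G} (ha₁ : GG.d₀ a₁ = 1) :
    GG.ι (GG.d₁ a) * a₁ * (GG.ι (GG.d₁ a))⁻¹ = a * a₁ * a⁻¹ := by
  set c := (GG.ι (GG.d₁ a))⁻¹ * a
  have hc : GG.d₁ c = 1 := by simp only [c, map_mul, map_inv, d₁_ι, inv_mul_cancel]
  have hca₁ : c * a₁ * c⁻¹ = a₁ :=
    (GG.commute_of_d₀_eq_one_of_d₁_eq_one ha₁ hc).symm.mul_inv_cancel
  calc GG.ι (GG.d₁ a) * a₁ * (GG.ι (GG.d₁ a))⁻¹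
      = GG.ι (GG.d₁ a) * (c * a₁ * c⁻¹) * (GG.ι (GG.d₁ a))⁻¹ := by rw [hca₁]
    _ = a * a₁ * a⁻¹ := by simp only [c]; group

end GroupGroupoid

/-- for a group-groupoid with source `d₀`, target `d₁` and object
group `O`, the action of `O` on `A = Ker d₀` by `b • a = ι b * a * (ι b)⁻¹`
preserves `Ker d₀` and the restriction of `d₁` to `Ker d₀` is a crossed module:
`d₁ (b • a) = b * d₁ a * b⁻¹` (CM1) and `(d₁ a) • a₁ = a * a₁ * a⁻¹` (CM2). -/
theorem groupGroupoid_gives_crossedModule {O G : Type*} [Group O] [Group G]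
    (GG : GroupGroupoid O G) :
    (∀ (b : O) (a : G), GG.d₀ a = 1 → GG.d₀ (GG.ι b * a * (GG.ι b)⁻¹) = 1) ∧
    (∀ (b : O) (a : G), GG.d₀ a = 1 →
      GG.d₁ (GG.ι b * a * (GG.ι b)⁻¹) = b * GG.d₁ a * b⁻¹) ∧
    (∀ (a a₁ : G), GG.d₀ a = 1 → GG.d₀ a₁ = 1 →
      GG.ι (GG.d₁ a) * a₁ * (GG.ι (GG.d₁ a))⁻¹ = a * a₁ * a⁻¹) := by
  refine ⟨fun b a ha => ?_, fun b a _ => GG.d₁_ι_conj b a,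
    fun a _ _ ha₁ => GG.ι_d₁_conj_eq_conj a ha₁⟩
  rw [GG.d₀_ι_conj, ha, mul_one, mul_inv_cancel]
end

section
/- Let (A,B,α) be a crossed module. Define on the semidirect product A ⋊ B (with (a₁,b₁)+(a,b) = (a₁ + b₁·a, b₁ + b)) the maps d₀(a,b) = b, d₁(a,b) = α(a) + b, and composition (a₁,b₁)∘(a,b) = (a₁ + a, b) whenever b₁ = α(a) + b. Then this defines a groupoid with object group B on which addition is a functor, i.e. a group-groupoid; in particular the interchange law ((a₁,b₁)∘(a,b)) + ((a₁',b₁')∘(a',b')) = ((a₁,b₁)+(a₁',b₁')) ∘ ((a,b)+(a',b')) holds whenever both composites are defined. -/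
/-! CM1 makes the target map `(a, b) ↦ α a * b` multiplicative on `A ⋊ B`. For the interchange
law, CM2 says that acting by `α a * b` is acting by `b` followed by conjugation by `a`; the
resulting `a⁻¹` cancels against the `a` of the second composite. -/

namespace IsCrossedModule

variable {A B : Type*} [Group A] [Group B] {act : B → A → A} {α : A →* B}

theorem map_mul_act (h : IsCrossedModule act α) (a a' : A) (b : B) :
    α (a * act b a') = α a * b * α a' * b⁻¹ := by
  rw [map_mul, h.cm1]
  group

theorem target_mul (h : IsCrossedModule act α) (a a' : A) (b b' : B) :
    α (a * act b a') * (b * b') = (α a * b) * (α a' * b') := by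
  rw [h.map_mul_act]
  group

theorem act_target (h : IsCrossedModule act α) (a a₁ : A) (b : B) :
    act (α a * b) a₁ = a * act b a₁ * a⁻¹ := by
  rw [h.act_mul, h.cm2]

theorem interchange (h : IsCrossedModule act α) (a₁ a a₁' a' : A) (b : B) :
    (a₁ * act (α a * b) a₁') * (a * act b a') = (a₁ * a) * act b (a₁' * a') := by
  rw [h.act_target, h.act_map_mul]
  group

end IsCrossedModule

/-- The composites are written out after substituting the composability conditions
`b₁ = α a * b` and `b₁' = α a' * b'`. -/
theorem crossedModule_gives_groupGroupoid {A B : Type*} [Group A] [Group B]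
    (act : B → A → A) (α : A →* B) (h : IsCrossedModule act α) :
    -- `d₁` is a group homomorphism on `A ⋊ B`:
    (∀ (a a' : A) (b b' : B),
      α (a * act b a') * (b * b') = (α a * b) * (α a' * b')) ∧
    -- the product of two composable pairs is composable:
    (∀ (a a' : A) (b b' : B),
      (α a * b) * (α a' * b') = α (a * act b a') * (b * b')) ∧
    -- the interchange law (first components; second components are `b * b'`):
    (∀ (a₁ a a₁' a' : A) (b b' : B),
      (a₁ * act (α a * b) a₁') * (a * act b a') = (a₁ * a) * act b (a₁' * a')) :=
  ⟨h.target_mul, fun a a' b b' => (h.target_mul a a' b b').symm,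
    fun a₁ a a₁' a' b _ => h.interchange a₁ a a₁' a' b⟩
end
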